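/- Let G be a finite simple graph and let p and q be two edge-disjoint simple paths in G that share at least two vertices. Then in every planar straight-line drawing of G, at least one of the paths p and q has at least one bend. -/

import Mathlib

open Classical

noncomputable section

/-- The plane. -/
abbrev Point : Type := ℝ × ℝ

/-- A straight-line drawing `f` of a simple graph `G` is *proper* if it is injective,
the segments of any two distinct edges sharing a vertex `v` intersect exactly in `f v`,
and no vertex other than the endpoints lies on the segment of an edge. -/
def IsProperDrawing {V : Type*} (G : SimpleGraph V) (f : V → Point) : Prop :=
  Function.Injective f ∧
  (∀ u v w : V, G.Adj u v → G.Adj v w → u ≠ w →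
    segment ℝ (f u) (f v) ∩ segment ℝ (f v) (f w) = {f v}) ∧
  (∀ u v x : V, G.Adj u v → x ≠ u → x ≠ v → f x ∉ segment ℝ (f u) (f v))

/-- A *planar* straight-line drawing: proper, and segments of edges with no
common endpoint are disjoint. -/
def IsPlanarDrawing {V : Type*} (G : SimpleGraph V) (f : V → Point) : Prop :=
  IsProperDrawing G f ∧
  ∀ u v w x : V, G.Adj u v → G.Adj w x → u ≠ w → u ≠ x → v ≠ w → v ≠ x →
    segment ℝ (f u) (f v) ∩ segment ℝ (f w) (f x) = ∅

/-- Number of bends of a path (given by its list of vertices) in the drawing `f`: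
a bend at each internal vertex `b` (consecutive triple `a, b, c`) such that
`f b` is not strictly between `f a` and `f c`. -/
def numBends {V : Type*} (f : V → Point) : List V → ℕ
  | a :: b :: c :: rest =>
    (if f b ∈ openSegment ℝ (f a) (f c) then 0 else 1) + numBends f (b :: c :: rest)
  | _ => 0

/-- The edges of a path given by its list of vertices. -/
def edgesOfList {V : Type*} : List V → List (Sym2 V)
  | a :: b :: rest => s(a, b) :: edgesOfList (b :: rest)
  | _ => []

/-- A list of vertices represents a simple path of `G`. -/
def IsPathList {V : Type*} (G : SimpleGraph V) (l : List V) : Prop :=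
  l.Chain' G.Adj ∧ l.Nodup

/-- A path-based support: a set of simple paths of `G` covering all edges of `G`. -/
def IsPathBasedSupport {V : Type*} (G : SimpleGraph V) (P : Finset (List V)) : Prop :=
  (∀ l ∈ P, IsPathList G l) ∧ ∀ e ∈ G.edgeSet, ∃ l ∈ P, e ∈ edgesOfList l

/-- A path-based support is *linear* if two distinct paths share at most one vertex. -/
def IsLinear {V : Type*} (P : Finset (List V)) : Prop :=
  ∀ l₁ ∈ P, ∀ l₂ ∈ P, l₁ ≠ l₂ →
    ∀ u v : V, u ∈ l₁ → u ∈ l₂ → v ∈ l₁ → v ∈ l₂ → u = v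

/-- An *alignment* of `G`: a symmetric relation pairing distinct incident edges of `G`,
such that at every vertex each incident edge is paired with at most one
other edge incident to that vertex. -/
structure IsAlignment {V : Type*} (G : SimpleGraph V) (A : Sym2 V → Sym2 V → Prop) : Prop where
  symm : ∀ e e', A e e' → A e' e
  mem_edges : ∀ e e', A e e' → e ∈ G.edgeSet ∧ e' ∈ G.edgeSet
  ne : ∀ e e', A e e' → e ≠ e'
  share : ∀ e e', A e e' → ∃ v : V, v ∈ e ∧ v ∈ e'
  uniq : ∀ (v : V) (e e₁ e₂ : Sym2 V), v ∈ e → v ∈ e₁ → v ∈ e₂ →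
    A e e₁ → A e e₂ → e₁ = e₂

/-- Number of bends of a path with respect to an alignment `A`:
a bend at each internal vertex whose two incident path edges are not paired in `A`. -/
def numBendsA {V : Type*} (A : Sym2 V → Sym2 V → Prop) : List V → ℕ
  | a :: b :: c :: rest =>
    (if A s(a, b) s(b, c) then 0 else 1) + numBendsA A (b :: c :: rest)
  | _ => 0

/-- A cactus: a connected graph in which every edge lies on at most one cycle,
i.e. two cycles sharing an edge have the same edge set. -/
def IsCactus {V : Type*} (G : SimpleGraph V) : Prop :=
  G.Connected ∧ ∀ (v w : V) (c : G.Walk v v) (c' : G.Walk w w),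
    c.IsCycle → c'.IsCycle → (∃ e, e ∈ c.edges ∧ e ∈ c'.edges) →
    ∀ e, e ∈ c.edges ↔ e ∈ c'.edges

end


section Aux

open Classical

lemma sbtw_concat {a b c d : Point} (h₁ : Sbtw ℝ a b c) (h₂ : Sbtw ℝ b c d) :
    Sbtw ℝ a c d := by
  obtain ⟨⟨t, ht, hb⟩, hac⟩ := sbtw_iff_mem_image_Ioo_and_ne.1 h₁
  obtain ⟨⟨s, hs, hc⟩, hbd⟩ := sbtw_iff_mem_image_Ioo_and_ne.1 h₂
  rw [AffineMap.lineMap_apply_module] at hb hc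
  obtain ⟨ht0, ht1⟩ := ht
  obtain ⟨hs0, hs1⟩ := hs
  set D : ℝ := 1 - t + s * t with hD
  have hD0 : 0 < D := by nlinarith
  have hsD : s < D := by nlinarith
  have key : D • c = ((1 - s) * (1 - t)) • a + s • d := by
    have hc' : (1 - s) • ((1 - t) • a + t • c) + s • d = c := by rw [hb]; exact hc
    have h1 := congrArg Prod.fst hc'
    have h2 := congrArg Prod.snd hc'
    simp only [Prod.fst_add, Prod.snd_add, Prod.smul_fst, Prod.smul_snd, smul_eq_mul] at h1 h2
    apply Prod.ext <;>
      simp only [Prod.fst_add, Prod.snd_add, Prod.smul_fst, Prod.smul_snd, smul_eq_mul, hD]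
    · linear_combination -h1
    · linear_combination -h2
  have had : a ≠ d := by
    rintro rfl
    have h2 : ((1 - s) * (1 - t)) • a + s • a = D • a := by
      rw [← add_smul]; congr 1; simp [hD]; ring
    exact hac (smul_right_injective Point hD0.ne' (key.trans h2)).symm
  refine sbtw_iff_mem_image_Ioo_and_ne.2 ⟨⟨s / D, ⟨div_pos hs0 hD0, (div_lt_one hD0).2 hsD⟩, ?_⟩, had⟩
  rw [AffineMap.lineMap_apply_module]
  apply smul_right_injective Point hD0.ne'
  show D • ((1 - s / D) • a + (s / D) • d) = D • c
  rw [key, smul_add, smul_smul, smul_smul]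
  have e1 : D * (1 - s / D) = (1 - s) * (1 - t) := by field_simp; ring
  have e2 : D * (s / D) = s := by field_simp
  rw [e1, e2]

lemma segment_split {x y z : Point} (h : Wbtw ℝ x y z) :
    segment ℝ x z ⊆ segment ℝ x y ∪ segment ℝ y z := by
  intro m hm
  obtain ⟨t, _, hy⟩ := h
  rw [← insert_endpoints_openSegment] at hm
  rcases hm with rfl | hm
  · exact Or.inl (left_mem_segment ℝ _ _)
  rcases hm with rfl | hm
  · exact Or.inr (right_mem_segment ℝ _ _)
  have h2 := openSegment_subset_union x z ⟨t, hy⟩ hm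
  rcases h2 with rfl | h2
  · exact Or.inl (right_mem_segment ℝ _ _)
  rcases h2 with h2 | h2
  · exact Or.inl (openSegment_subset_segment ℝ _ _ h2)
  · exact Or.inr (openSegment_subset_segment ℝ _ _ h2)

lemma numBends_zero' {V : Type*} (f : V → Point) :
    ∀ (l : List V), numBends f l = 0 → ∀ (k : ℕ) (h : k + 2 < l.length),
      f (l[k+1]'(by omega)) ∈ openSegment ℝ (f (l[k]'(by omega))) (f l[k+2])
  | [], _, k, h => by simp at h
  | [a], _, k, h => by simp only [List.length_cons, List.length_nil] at h; omega
  | [a, b], _, k, h => by simp only [List.length_cons, List.length_nil] at h; omega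
  | a :: b :: c :: rest, h0, 0, h => by
      rw [numBends] at h0
      by_cases hc : f b ∈ openSegment ℝ (f a) (f c)
      · exact hc
      · simp only [if_neg hc] at h0; omega
  | a :: b :: c :: rest, h0, k + 1, h => by
      rw [numBends] at h0
      have h0' : numBends f (b :: c :: rest) = 0 :=
        Nat.eq_zero_of_add_eq_zero_left h0
      exact numBends_zero' f (b :: c :: rest) h0' k
        (by simp only [List.length_cons] at h ⊢; omega)

lemma chain'_getElem {V : Type*} {R : V → V → Prop} :
    ∀ (l : List V), l.Chain' R → ∀ (k : ℕ) (h : k + 1 < l.length),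
      R (l[k]'(by omega)) (l[k+1])
  | a :: b :: rest, hc, 0, h => (List.isChain_cons_cons.1 hc).1
  | a :: b :: rest, hc, k+1, h =>
      chain'_getElem (b :: rest) (List.isChain_cons_cons.1 hc).2 k
        (by simp only [List.length_cons] at h ⊢; omega)
  | [], _, k, h => by simp at h
  | [a], _, k, h => by simp only [List.length_cons, List.length_nil] at h; omega

lemma edgesOfList_getElem_mem {V : Type*} :
    ∀ (l : List V) (k : ℕ) (h : k + 1 < l.length),
      s(l[k]'(by omega), l[k+1]) ∈ edgesOfList l
  | a :: b :: rest, 0, h => by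
      rw [edgesOfList]
      exact List.mem_cons_self
  | a :: b :: rest, k+1, h => by
      rw [edgesOfList]
      exact List.mem_cons_of_mem _ (edgesOfList_getElem_mem (b :: rest) k
        (by simp only [List.length_cons] at h ⊢; omega))
  | [], k, h => by simp at h
  | [a], k, h => by simp only [List.length_cons, List.length_nil] at h; omega

lemma nodup_getElem_ne {V : Type*} {l : List V} (h : l.Nodup) {i j : ℕ} (hi : i < l.length)
    (hj : j < l.length) (hij : i ≠ j) : l[i] ≠ l[j] := by
  intro he
  exact hij ((h.getElem_inj_iff).1 he)

lemma sbtw_of_noBend {V : Type*} (f : V → Point) (hinj : Function.Injective f)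
    (l : List V) (hnd : l.Nodup) (h0 : numBends f l = 0) :
    ∀ (k : ℕ) (h : k + 2 < l.length),
      Sbtw ℝ (f (l[k]'(by omega))) (f (l[k+1]'(by omega))) (f l[k+2]) := by
  intro k h
  have hmem := numBends_zero' f l h0 k h
  refine ⟨mem_segment_iff_wbtw.1 (openSegment_subset_segment ℝ _ _ hmem), ?_, ?_⟩
  · exact fun he => absurd (hinj he) (nodup_getElem_ne hnd (by omega) (by omega) (by omega))
  · exact fun he => absurd (hinj he) (nodup_getElem_ne hnd (by omega) (by omega) (by omega))

lemma chain_sbtw {V : Type*} (f : V → Point) (l : List V)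
    (hS : ∀ (k : ℕ) (h : k + 2 < l.length),
      Sbtw ℝ (f (l[k]'(by omega))) (f (l[k+1]'(by omega))) (f l[k+2])) :
    ∀ (i j : ℕ) (hij : i < j) (hj : j + 1 < l.length),
      Sbtw ℝ (f (l[i]'(by omega))) (f (l[j]'(by omega))) (f l[j+1]) := by
  intro i j hij
  induction j, hij using Nat.le_induction with
  | base => intro hj; exact hS i hj
  | succ j hij ih =>
      intro hj
      exact sbtw_concat (ih (by omega)) (hS j (by omega))

lemma wbtw_all {V : Type*} (f : V → Point) (l : List V)
    (hS : ∀ (k : ℕ) (h : k + 2 < l.length),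
      Sbtw ℝ (f (l[k]'(by omega))) (f (l[k+1]'(by omega))) (f l[k+2])) :
    ∀ (i j k : ℕ) (hi : i < l.length) (hj : j < l.length) (hk : k < l.length),
      i ≤ j → j ≤ k → Wbtw ℝ (f (l[i]'hi)) (f (l[j]'hj)) (f l[k]) := by
  intro i j k hi hj hk hij hjk
  rcases eq_or_lt_of_le hij with rfl | hij'
  · exact wbtw_self_left ℝ _ _
  rcases eq_or_lt_of_le hjk with rfl | hjk'
  · exact wbtw_self_right ℝ _ _
  clear hij hjk
  revert hk
  induction k, hjk' using Nat.le_induction with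
  | base => intro hk; exact (chain_sbtw f l hS i j hij' hk).wbtw
  | succ k hk' ih =>
      intro hk
      have h1 := (chain_sbtw f l hS i k (by omega) hk).wbtw
      exact h1.trans_left (ih (by omega))

lemma cover {V : Type*} (f : V → Point) (l : List V)
    (hS : ∀ (k : ℕ) (h : k + 2 < l.length),
      Sbtw ℝ (f (l[k]'(by omega))) (f (l[k+1]'(by omega))) (f l[k+2])) :
    ∀ (i j : ℕ) (hij : i < j) (hj : j < l.length), ∀ m,
      m ∈ segment ℝ (f (l[i]'(by omega))) (f l[j]) →
      ∃ (k : ℕ) (hk : k + 1 < l.length), m ∈ segment ℝ (f (l[k]'(by omega))) (f l[k+1]) := by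
  intro i j hij hj m hm
  have main : ∀ (d i : ℕ) (hd : j - i = d) (hij : i < j),
      ∀ m, m ∈ segment ℝ (f (l[i]'(by omega))) (f l[j]) →
      ∃ (k : ℕ) (hk : k + 1 < l.length), m ∈ segment ℝ (f (l[k]'(by omega))) (f l[k+1]) := by
    intro d
    induction d with
    | zero => intro i hd hij; omega
    | succ d ih =>
        intro i hd hij m hm
        by_cases hij1 : i + 1 = j
        · obtain rfl : j = i + 1 := hij1.symm
          exact ⟨i, by omega, hm⟩
        · have hi1j : i + 1 < j := by omega
          have hw : Wbtw ℝ (f (l[i]'(by omega))) (f (l[i+1]'(by omega))) (f l[j]) :=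
            wbtw_all f l hS i (i+1) j (by omega) (by omega) hj (by omega) (by omega)
          rcases segment_split hw hm with h | h
          · exact ⟨i, by omega, h⟩
          · exact ih (i+1) (by omega) hi1j m h
  exact main (j - i) i rfl hij m hm

lemma shared_contra {V : Type*} (G : SimpleGraph V) (f : V → Point)
    (hf : IsPlanarDrawing G f) {u v w x : V} (huv : G.Adj u v) (hwx : G.Adj w x)
    (hne : s(u, v) ≠ s(w, x)) {m : Point}
    (hm1 : m ∈ openSegment ℝ (f u) (f v)) (hmq : m ∈ segment ℝ (f w) (f x)) : False := by
  obtain ⟨⟨hinj, hsh, hnm⟩, hpl⟩ := hf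
  have hfuv : f u ≠ f v := fun h => huv.ne (hinj h)
  have hm1' : m ∈ segment ℝ (f u) (f v) := openSegment_subset_segment ℝ _ _ hm1
  by_cases h1 : u = w
  · subst h1
    have hvx : v ≠ x := fun h => hne (by rw [h])
    have hint := hsh v u x huv.symm hwx hvx
    have hmm : m ∈ segment ℝ (f v) (f u) ∩ segment ℝ (f u) (f x) :=
      ⟨segment_symm ℝ (f u) (f v) ▸ hm1', hmq⟩
    rw [hint, Set.mem_singleton_iff] at hmm
    rw [hmm] at hm1
    exact hfuv (left_mem_openSegment_iff.1 hm1)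
  by_cases h2 : u = x
  · subst h2
    have hvw : v ≠ w := by
      intro h; apply hne; rw [h]; exact Sym2.eq_swap
    have hint := hsh v u w huv.symm hwx.symm hvw
    have hmm : m ∈ segment ℝ (f v) (f u) ∩ segment ℝ (f u) (f w) :=
      ⟨segment_symm ℝ (f u) (f v) ▸ hm1', segment_symm ℝ (f w) (f u) ▸ hmq⟩
    rw [hint, Set.mem_singleton_iff] at hmm
    rw [hmm] at hm1
    exact hfuv (left_mem_openSegment_iff.1 hm1)
  by_cases h3 : v = w
  · subst h3
    have hux : u ≠ x := by
      intro h; apply hne; rw [h]; exact Sym2.eq_swap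
    have hint := hsh u v x huv hwx hux
    have hmm : m ∈ segment ℝ (f u) (f v) ∩ segment ℝ (f v) (f x) := ⟨hm1', hmq⟩
    rw [hint, Set.mem_singleton_iff] at hmm
    rw [hmm] at hm1
    exact hfuv.symm (right_mem_openSegment_iff.1 hm1).symm
  by_cases h4 : v = x
  · subst h4
    have huw : u ≠ w := fun h => hne (by rw [h])
    have hint := hsh u v w huv hwx.symm huw
    have hmm : m ∈ segment ℝ (f u) (f v) ∩ segment ℝ (f v) (f w) :=
      ⟨hm1', segment_symm ℝ (f w) (f v) ▸ hmq⟩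
    rw [hint, Set.mem_singleton_iff] at hmm
    rw [hmm] at hm1
    exact hfuv.symm (right_mem_openSegment_iff.1 hm1).symm
  have hempty := hpl u v w x huv hwx h1 h2 h3 h4
  exact Set.eq_empty_iff_forall_notMem.1 hempty m ⟨hm1', hmq⟩

lemma key_false {V : Type*} (G : SimpleGraph V) (p q : List V)
    (hp : IsPathList G p) (hq : IsPathList G q)
    (hdisj : ∀ e : Sym2 V, e ∈ edgesOfList p → e ∉ edgesOfList q)
    (f : V → Point) (hf : IsPlanarDrawing G f)
    (hp0 : numBends f p = 0) (hq0 : numBends f q = 0)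
    (ia ib : ℕ) (hib : ib < p.length) (hiab : ia < ib)
    (ja jb : ℕ) (hja : ja < q.length) (hjb : jb < q.length) (hjab : ja ≠ jb)
    (ha : p[ia]'(by omega) = q[ja]) (hb : p[ib] = q[jb]) : False := by
  have hinj : Function.Injective f := hf.1.1
  have hSp := sbtw_of_noBend f hinj p hp.2 hp0
  have hSq := sbtw_of_noBend f hinj q hq.2 hq0
  have hia1 : ia + 1 < p.length := by omega
  have huv : G.Adj (p[ia]'(by omega)) (p[ia+1]'hia1) := chain'_getElem p hp.1 ia hia1
  set m : Point := (2⁻¹ : ℝ) • f (p[ia]'(by omega)) + (2⁻¹ : ℝ) • f (p[ia+1]'hia1) with hmdef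
  have hm1 : m ∈ openSegment ℝ (f (p[ia]'(by omega))) (f (p[ia+1]'hia1)) :=
    ⟨2⁻¹, 2⁻¹, by norm_num, by norm_num, by norm_num, rfl⟩
  have hw : Wbtw ℝ (f (p[ia]'(by omega))) (f (p[ia+1]'hia1)) (f p[ib]) :=
    wbtw_all f p hSp ia (ia+1) ib (by omega) (by omega) hib (by omega) (by omega)
  have hm2 : m ∈ segment ℝ (f (p[ia]'(by omega))) (f p[ib]) :=
    (convex_segment _ _).segment_subset (left_mem_segment ℝ _ _) hw.mem_segment
      (openSegment_subset_segment ℝ _ _ hm1)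
  rw [ha, hb] at hm2
  have hm3 : ∃ (k : ℕ) (hk : k + 1 < q.length),
      m ∈ segment ℝ (f (q[k]'(by omega))) (f q[k+1]) := by
    rcases lt_or_gt_of_ne hjab with h | h
    · exact cover f q hSq ja jb h hjb m hm2
    · refine cover f q hSq jb ja h hja m ?_
      rw [segment_symm]
      exact hm2
  obtain ⟨k, hk, hmq⟩ := hm3
  have hwx : G.Adj (q[k]'(by omega)) (q[k+1]'hk) := chain'_getElem q hq.1 k hk
  have he1 : s(p[ia]'(by omega), p[ia+1]'hia1) ∈ edgesOfList p :=
    edgesOfList_getElem_mem p ia hia1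
  have he2 : s(q[k]'(by omega), q[k+1]'hk) ∈ edgesOfList q :=
    edgesOfList_getElem_mem q k hk
  have hne : s(p[ia]'(by omega), p[ia+1]'hia1) ≠ s(q[k]'(by omega), q[k+1]'hk) :=
    fun h => hdisj _ he1 (h ▸ he2)
  exact shared_contra G f hf huv hwx hne hm1 hmq

end Aux

/-- If two edge-disjoint simple paths of `G` share at least two
vertices, then in every planar straight-line drawing of `G` at least one of the two
paths has at least one bend. -/
theorem stmt16 {V : Type*} [Fintype V] (G : SimpleGraph V) (p q : List V)
    (hp : IsPathList G p) (hq : IsPathList G q)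
    (hdisj : ∀ e : Sym2 V, e ∈ edgesOfList p → e ∉ edgesOfList q)
    (hshare : ∃ a b : V, a ≠ b ∧ a ∈ p ∧ a ∈ q ∧ b ∈ p ∧ b ∈ q)
    (f : V → Point) (hf : IsPlanarDrawing G f) :
    1 ≤ numBends f p ∨ 1 ≤ numBends f q := by
  by_contra hcon
  push_neg at hcon
  obtain ⟨hp1, hq1⟩ := hcon
  have hp0 : numBends f p = 0 := by omega
  have hq0 : numBends f q = 0 := by omega
  obtain ⟨a, b, hab, hap, haq, hbp, hbq⟩ := hshare
  obtain ⟨ia, hia, hpa⟩ := List.mem_iff_getElem.1 hap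
  obtain ⟨ib, hib, hpb⟩ := List.mem_iff_getElem.1 hbp
  obtain ⟨ja, hja, hqa⟩ := List.mem_iff_getElem.1 haq
  obtain ⟨jb, hjb, hqb⟩ := List.mem_iff_getElem.1 hbq
  have hiab : ia ≠ ib := by
    intro h
    subst h
    exact hab (hpa.symm.trans hpb)
  have hjab : ja ≠ jb := by
    intro h
    subst h
    exact hab (hqa.symm.trans hqb)
  rcases lt_or_gt_of_ne hiab with h | h
  · exact key_false G p q hp hq hdisj f hf hp0 hq0 ia ib hib h ja jb hja hjb hjab
      (by rw [hpa, hqa]) (by rw [hpb, hqb])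
  · exact key_false G p q hp hq hdisj f hf hp0 hq0 ib ia hia h jb ja hjb hja (Ne.symm hjab)
      (by rw [hpb, hqb]) (by rw [hpa, hqa])
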